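/- Let ρ := (5/10)|00⟩⟨00| + (3/10)|01⟩⟨01| + (2/10)|10⟩⟨10| on ℂ² ⊗ ℂ². Then (i) the largest eigenvalue of ρ equals 1/2, so ρ ∈ 𝔄𝔉₂; and (ii) there exists a 4×4 unitary matrix U such that the partial transpose of UρU† has a negative eigenvalue (hence UρU† is entangled and ρ is not absolutely separable). -/

import Mathlib

open Matrix Kronecker Complex
open scoped ComplexOrder

/-- The canonical maximally entangled vector `|ψ⁺⟩ = (1/√d) ∑ᵢ |ii⟩` on `ℂ^d ⊗ ℂ^d`. -/
noncomputable def psiPlus (d : ℕ) : (Fin d × Fin d) → ℂ :=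
  fun p => if p.1 = p.2 then ((Real.sqrt d)⁻¹ : ℝ) else 0

/-- The fully entangled fraction: the supremum over `d × d` unitaries `V` of
`⟨ψ⁺| (I ⊗ V)† ρ (I ⊗ V) |ψ⁺⟩`. -/
noncomputable def fef (d : ℕ) (ρ : Matrix (Fin d × Fin d) (Fin d × Fin d) ℂ) : ℝ :=
  ⨆ V : Matrix.unitaryGroup (Fin d) ℂ,
    (star (psiPlus d) ⬝ᵥ
      ((((1 : Matrix (Fin d) (Fin d) ℂ) ⊗ₖ (V : Matrix (Fin d) (Fin d) ℂ))ᴴ * ρ *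
        ((1 : Matrix (Fin d) (Fin d) ℂ) ⊗ₖ (V : Matrix (Fin d) (Fin d) ℂ))) *ᵥ psiPlus d)).re

/-- A density matrix: positive semidefinite with unit trace. -/
def IsDensityMatrix {n : Type*} [Fintype n] (ρ : Matrix n n ℂ) : Prop :=
  ρ.PosSemidef ∧ ρ.trace = 1

/-- `ρ` has absolute fully entangled fraction: `F(UρU†) ≤ 1/d` for every unitary `U`. -/
def AbsFEF (d : ℕ) (ρ : Matrix (Fin d × Fin d) (Fin d × Fin d) ℂ) : Prop :=
  ∀ U ∈ Matrix.unitaryGroup (Fin d × Fin d) ℂ, fef d (U * ρ * Uᴴ) ≤ 1 / d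

/-- Basis vector `|ij⟩` of `ℂ^d ⊗ ℂ^d`. -/
def ket (d : ℕ) (i j : Fin d) : (Fin d × Fin d) → ℂ :=
  fun p => if p = (i, j) then 1 else 0

/-- Rank-one projector `|v⟩⟨v|`. -/
def proj {n : Type*} (v : n → ℂ) : Matrix n n ℂ :=
  Matrix.vecMulVec v (star v)

/-- The partial transpose on the second tensor factor. -/
def ptransposeB {d : ℕ} (M : Matrix (Fin d × Fin d) (Fin d × Fin d) ℂ) :
    Matrix (Fin d × Fin d) (Fin d × Fin d) ℂ :=
  Matrix.of fun p q => M (p.1, q.2) (q.1, p.2)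

/-- Separability of a two-qubit density matrix: a convex combination of product states. -/
def IsSeparable2 (ρ : Matrix (Fin 2 × Fin 2) (Fin 2 × Fin 2) ℂ) : Prop :=
  ∃ (n : ℕ) (p : Fin n → ℝ) (A B : Fin n → Matrix (Fin 2) (Fin 2) ℂ),
    (∀ k, 0 ≤ p k) ∧ (∑ k, p k) = 1 ∧
    (∀ k, (A k).PosSemidef ∧ (A k).trace = 1) ∧
    (∀ k, (B k).PosSemidef ∧ (B k).trace = 1) ∧
    ρ = ∑ k, ((p k : ℝ) : ℂ) • (A k ⊗ₖ B k)

/-- Absolute separability: `UρU†` is separable for every global unitary `U`. -/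
def AbsSep2 (ρ : Matrix (Fin 2 × Fin 2) (Fin 2 × Fin 2) ℂ) : Prop :=
  ∀ U ∈ Matrix.unitaryGroup (Fin 2 × Fin 2) ℂ, IsSeparable2 (U * ρ * Uᴴ)

/-- The state `ρ = (5/10)|00⟩⟨00| + (3/10)|01⟩⟨01| + (2/10)|10⟩⟨10|`. -/
noncomputable def rho12 : Matrix (Fin 2 × Fin 2) (Fin 2 × Fin 2) ℂ :=
  (5/10 : ℂ) • proj (ket 2 0 0) + (3/10 : ℂ) • proj (ket 2 0 1) + (2/10 : ℂ) • proj (ket 2 1 0)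

/-!
Since `ρ` is diagonal with spectrum `{1/2, 3/10, 1/5, 0}`, the matrix `1/2 • 1 - ρ` is positive
semidefinite, and this property survives every unitary conjugation, both the global `U` and the
local `I ⊗ V` in the definition of the fully entangled fraction; evaluated at the unit vector `φ⁺`
it gives `F(UρU†) ≤ 1/2`.

For entanglement, rotate the plane spanned by `|00⟩` and `|11⟩` by an angle `θ` close to `π/4`.
The partial transpose moves the coherence `(1/2) cos θ sin θ` between `|00⟩` and `|11⟩` into the
block spanned by `|01⟩` and `|10⟩`, whose determinant `3/50 - (cos θ sin θ)² / 4` is then negative.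
So the partial transpose is not positive semidefinite, whereas the partial transpose of a separable
state is (Peres).
-/

namespace Matrix

variable {n 𝕜 : Type*} [Fintype n] [DecidableEq n] [RCLike 𝕜]

lemma mul_smul_one_sub_mul_conjTranspose {U : Matrix n n 𝕜} (hU : U ∈ unitaryGroup n 𝕜)
    (c : 𝕜) (A : Matrix n n 𝕜) : U * (c • 1 - A) * Uᴴ = c • 1 - U * A * Uᴴ := by
  rw [mul_sub, sub_mul, mul_smul_comm, smul_mul_assoc, mul_one, ← star_eq_conjTranspose,
    Unitary.mul_star_self_of_mem hU]

lemma IsHermitian.posSemidef_smul_one_sub {A : Matrix n n 𝕜} (hA : A.IsHermitian) {c : ℝ}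
    (h : ∀ i, hA.eigenvalues i ≤ c) : ((c : 𝕜) • 1 - A).PosSemidef := by
  have hdiag : (diagonal fun i => ((c - hA.eigenvalues i : ℝ) : 𝕜)).PosSemidef :=
    posSemidef_diagonal_iff.mpr fun i => by simpa using h i
  convert hdiag.mul_mul_conjTranspose_same (hA.eigenvectorUnitary : Matrix n n 𝕜) using 1
  conv_lhs => rw [hA.spectral_theorem]
  simp only [Unitary.conjStarAlgAut_apply, star_eq_conjTranspose]
  rw [← mul_smul_one_sub_mul_conjTranspose hA.eigenvectorUnitary.2]
  congr 2
  ext i j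
  by_cases hij : i = j <;> simp [hij, Algebra.algebraMap_eq_smul_one, sub_smul]

lemma IsHermitian.exists_eigenvalues_neg {A : Matrix n n 𝕜} (hA : A.IsHermitian)
    (h : ¬ A.PosSemidef) : ∃ i, hA.eigenvalues i < 0 := by
  simpa [hA.posSemidef_iff_eigenvalues_nonneg, Pi.le_def] using h

lemma IsHermitian.range_eigenvalues_of_eq_diagonal {A : Matrix n n 𝕜} (hA : A.IsHermitian)
    {r : n → ℝ} (h : A = diagonal fun i => (r i : 𝕜)) :
    Set.range hA.eigenvalues = Set.range r := by
  subst h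
  have hspec := hA.spectrum_eq_image_range
  rw [spectrum_diagonal] at hspec
  exact (Set.image_injective.mpr RCLike.ofReal_injective
    ((Set.range_comp _ _).symm.trans hspec)).symm

lemma re_dotProduct_mulVec_le_of_posSemidef_sub {A : Matrix n n 𝕜} {c : ℝ}
    (h : ((c : 𝕜) • 1 - A).PosSemidef) {v : n → 𝕜} (hv : star v ⬝ᵥ v = 1) :
    RCLike.re (star v ⬝ᵥ (A *ᵥ v)) ≤ c := by
  have hv_nonneg := h.dotProduct_mulVec_nonneg v
  rw [sub_mulVec, dotProduct_sub, smul_mulVec, one_mulVec, dotProduct_smul, hv, smul_eq_mul,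
    mul_one] at hv_nonneg
  simpa using (RCLike.nonneg_iff.mp hv_nonneg).1

end Matrix

section FullyEntangledFraction

variable {d : ℕ} [NeZero d]

lemma star_psiPlus_dotProduct_psiPlus : star (psiPlus d) ⬝ᵥ psiPlus d = 1 := by
  simp only [dotProduct, Pi.star_apply, psiPlus, ofReal_inv, RCLike.star_def, mul_ite, mul_zero,
    Fintype.sum_prod_type, Finset.sum_ite_eq, Finset.mem_univ, ↓reduceIte, map_inv₀, conj_ofReal,
    Finset.sum_const, Finset.card_univ, Fintype.card_fin, nsmul_eq_mul]
  rw [← mul_inv, ← Complex.ofReal_mul, Real.mul_self_sqrt d.cast_nonneg, Complex.ofReal_natCast,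
    mul_inv_cancel₀ (Nat.cast_ne_zero.mpr (NeZero.ne d))]

lemma fef_le_of_posSemidef_sub {σ : Matrix (Fin d × Fin d) (Fin d × Fin d) ℂ} {c : ℝ}
    (h : ((c : ℂ) • 1 - σ).PosSemidef) : fef d σ ≤ c := by
  refine ciSup_le fun V => re_dotProduct_mulVec_le_of_posSemidef_sub ?_
    star_psiPlus_dotProduct_psiPlus
  let W : Matrix (Fin d × Fin d) (Fin d × Fin d) ℂ := 1 ⊗ₖ V.1
  have hW : Wᴴ ∈ unitaryGroup (Fin d × Fin d) ℂ :=
    Unitary.star_mem (kronecker_mem_unitary (one_mem _) V.2)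
  have hconj := h.mul_mul_conjTranspose_same Wᴴ
  rwa [mul_smul_one_sub_mul_conjTranspose hW, conjTranspose_conjTranspose] at hconj

lemma absFEF_of_eigenvalues_le {ρ : Matrix (Fin d × Fin d) (Fin d × Fin d) ℂ}
    (hρ : ρ.IsHermitian) (h : ∀ i, hρ.eigenvalues i ≤ 1 / d) : AbsFEF d ρ := fun U hU =>
  fef_le_of_posSemidef_sub <| by
    have hconj := (hρ.posSemidef_smul_one_sub h).mul_mul_conjTranspose_same U
    rwa [mul_smul_one_sub_mul_conjTranspose hU] at hconj

end FullyEntangledFraction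

lemma Matrix.IsHermitian.ptransposeB {d : ℕ} {M : Matrix (Fin d × Fin d) (Fin d × Fin d) ℂ}
    (hM : M.IsHermitian) : (ptransposeB M).IsHermitian :=
  ext fun p q => hM.apply (p.1, q.2) (q.1, p.2)

theorem IsSeparable2.posSemidef_ptransposeB {ρ : Matrix (Fin 2 × Fin 2) (Fin 2 × Fin 2) ℂ}
    (hρ : IsSeparable2 ρ) : (ptransposeB ρ).PosSemidef := by
  obtain ⟨n, p, A, B, hp, -, hA, hB, rfl⟩ := hρ
  have hpt : ptransposeB (∑ k, (p k : ℂ) • (A k ⊗ₖ B k)) = ∑ k, (p k : ℂ) • (A k ⊗ₖ (B k)ᵀ) := by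
    ext
    simp [ptransposeB, Matrix.sum_apply]
  rw [hpt]
  exact posSemidef_sum _ fun k _ =>
    ((hA k).1.kronecker (hB k).1.transpose).smul (Complex.zero_le_real.mpr (hp k))

lemma rho12_eq_diagonal :
    rho12 = diagonal fun p => ((!![1/2, 3/10; 1/5, 0] : Matrix (Fin 2) (Fin 2) ℝ) p.1 p.2 : ℂ) := by
  ext ⟨i, j⟩ ⟨k, l⟩
  fin_cases i <;> fin_cases j <;> fin_cases k <;> fin_cases l <;>
    norm_num [rho12, proj, ket, vecMulVec_apply, diagonal_apply]

lemma rho12_max_eigenvalue_eq_half (hH : rho12.IsHermitian) :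
    (∀ i, hH.eigenvalues i ≤ 1/2) ∧ (∃ i, hH.eigenvalues i = 1/2) := by
  have hrange := hH.range_eigenvalues_of_eq_diagonal rho12_eq_diagonal
  constructor
  · intro i
    obtain ⟨⟨a, b⟩, hab⟩ : hH.eigenvalues i ∈ Set.range _ := hrange ▸ Set.mem_range_self i
    rw [← hab]
    fin_cases a <;> fin_cases b <;> norm_num
  · exact (hrange ▸ ⟨(0, 0), by simp⟩ : (1/2 : ℝ) ∈ Set.range hH.eigenvalues)

/-- The rotation of `span {|00⟩, |11⟩}` with `cos θ = 20/29`, `sin θ = 21/29` (a Pythagorean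
triple keeps the entries rational); `cos θ sin θ = 420/841` exceeds `√(6/25)`. -/
noncomputable def entanglingUnitary : Matrix (Fin 2 × Fin 2) (Fin 2 × Fin 2) ℂ :=
  of fun p q => if p.1 = p.2 ∧ q.1 = q.2 then
    (!![20/29, -21/29; 21/29, 20/29] : Matrix (Fin 2) (Fin 2) ℂ) p.1 q.1 else if p = q then 1 else 0

lemma entanglingUnitary_mem_unitaryGroup :
    entanglingUnitary ∈ unitaryGroup (Fin 2 × Fin 2) ℂ := by
  rw [mem_unitaryGroup_iff]
  ext ⟨i, j⟩ ⟨k, l⟩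
  fin_cases i <;> fin_cases j <;> fin_cases k <;> fin_cases l <;>
    norm_num [mul_apply, entanglingUnitary, Fintype.sum_prod_type, one_apply, map_ofNat]

def entanglementWitness : Fin 2 × Fin 2 → ℂ := 5 • ket 2 0 1 - 6 • ket 2 1 0

lemma witness_ptransposeB_entanglingUnitary_conj :
    star entanglementWitness ⬝ᵥ
      (ptransposeB (entanglingUnitary * rho12 * entanglingUnitaryᴴ) *ᵥ entanglementWitness) =
      -(2373/8410) := by
  simp only [dotProduct, mulVec, ptransposeB, mul_apply, rho12_eq_diagonal, diagonal_apply,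
    conjTranspose_apply, of_apply, Fintype.sum_prod_type, Fin.sum_univ_two, Pi.star_apply,
    entanglingUnitary, entanglementWitness, Pi.sub_apply, Pi.smul_apply, ket, Prod.ext_iff]
  norm_num [map_ofNat]

/-- `ρ = (5/10)|00⟩⟨00| + (3/10)|01⟩⟨01| + (2/10)|10⟩⟨10|` has largest eigenvalue `1/2`,
so `ρ ∈ 𝔄𝔉₂`; yet some unitary conjugate of `ρ` has a partial transpose with a negative
eigenvalue, hence is entangled, so `ρ` is not absolutely separable. -/
theorem rho12_absFEF_not_absSep (hH : rho12.IsHermitian) :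
    ((∀ i, hH.eigenvalues i ≤ 1/2) ∧ (∃ i, hH.eigenvalues i = 1/2)) ∧
    AbsFEF 2 rho12 ∧
    (∃ U ∈ Matrix.unitaryGroup (Fin 2 × Fin 2) ℂ,
      ∃ h : (ptransposeB (U * rho12 * Uᴴ)).IsHermitian,
        (∃ i, h.eigenvalues i < 0) ∧ ¬ IsSeparable2 (U * rho12 * Uᴴ)) ∧
    ¬ AbsSep2 rho12 := by
  have hspec := rho12_max_eigenvalue_eq_half hH
  have hU := entanglingUnitary_mem_unitaryGroup
  have hPT : (ptransposeB (entanglingUnitary * rho12 * entanglingUnitaryᴴ)).IsHermitian :=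
    (isHermitian_mul_mul_conjTranspose _ hH).ptransposeB
  have hPT_not_psd :
      ¬ (ptransposeB (entanglingUnitary * rho12 * entanglingUnitaryᴴ)).PosSemidef := fun h => by
    have := h.dotProduct_mulVec_nonneg entanglementWitness
    norm_num [witness_ptransposeB_entanglingUnitary_conj, Complex.le_def] at this
  have hent : ¬ IsSeparable2 (entanglingUnitary * rho12 * entanglingUnitaryᴴ) :=
    fun h => hPT_not_psd h.posSemidef_ptransposeB
  refine ⟨hspec, absFEF_of_eigenvalues_le hH (by simpa using hspec.1),
    ⟨_, hU, hPT, hPT.exists_eigenvalues_neg hPT_not_psd, hent⟩, fun h => hent (h _ hU)⟩
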